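/- arXiv:2603.14517 — 2 statements merged into one kernel-verified Lean document; each statement's English description precedes it below -/
import Mathlib

section
/- For all real p with 0 < p ≤ 1 and all natural numbers n ≥ 1 and N ≥ 1, the stale-entry survival sum S(n, N, p) = Σ_{i=1}^{n} (1 − p)^{⌊(n − i)/N⌋} satisfies S(n, N, p) ≤ N / p. -/
lemma sleepgate_block_sum (q : ℝ) (N : ℕ) (hN : 1 ≤ N) :
    ∀ m : ℕ, ∑ j ∈ Finset.range (m * N), q ^ (j / N)
      = (N : ℝ) * ∑ k ∈ Finset.range m, q ^ k := by
  intro m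
  induction m with
  | zero => simp
  | succ m ih =>
      have h1 : (m + 1) * N = m * N + N := by ring
      rw [h1, Finset.sum_range_add, ih, Finset.sum_range_succ]
      have h2 : ∀ i ∈ Finset.range N, q ^ ((m * N + i) / N) = q ^ m := by
        intro i hi
        have hi' : i < N := Finset.mem_range.mp hi
        have : (m * N + i) / N = m := by
          rw [Nat.mul_comm m N, Nat.mul_add_div (by omega)]
          simp [Nat.div_eq_of_lt hi']
        rw [this]
      rw [Finset.sum_congr rfl h2, Finset.sum_const, Finset.card_range]
      ring

/-- For all real `p` with `0 < p ≤ 1` and all natural numbers `n ≥ 1`, `N ≥ 1`,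
the stale-entry survival sum `S(n, N, p) = ∑_{i=1}^{n} (1 - p) ^ ⌊(n - i)/N⌋`
satisfies `S(n, N, p) ≤ N / p`. -/
theorem sleepgate_survival_sum_le_div
    (p : ℝ) (hp0 : 0 < p) (hp1 : p ≤ 1) (n N : ℕ) (hn : 1 ≤ n) (hN : 1 ≤ N) :
    ∑ i ∈ Finset.Icc 1 n, (1 - p) ^ ((n - i) / N) ≤ (N : ℝ) / p := by
  set q : ℝ := 1 - p with hq
  have hq0 : 0 ≤ q := by simp [hq]; linarith
  have hq1 : q < 1 := by simp [hq]; linarith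
  -- reindex to range n
  have hre : ∑ i ∈ Finset.Icc 1 n, q ^ ((n - i) / N)
      = ∑ j ∈ Finset.range n, q ^ (j / N) := by
    apply Finset.sum_nbij' (fun i => n - i) (fun j => n - j)
    · intro i hi
      simp only [Finset.mem_Icc] at hi
      simp only [Finset.mem_range]; omega
    · intro j hj
      simp only [Finset.mem_range] at hj
      simp only [Finset.mem_Icc]; omega
    · intro i hi
      simp only [Finset.mem_Icc] at hi; omega
    · intro j hj
      simp only [Finset.mem_range] at hj; omega
    · intro i hi; rfl
  rw [hre]
  have hsub : ∑ j ∈ Finset.range n, q ^ (j / N)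
      ≤ ∑ j ∈ Finset.range (n * N), q ^ (j / N) := by
    apply Finset.sum_le_sum_of_subset_of_nonneg
    · apply Finset.range_subset_range.mpr; nlinarith [hN, hn]
    · intro j _ _; positivity
  calc ∑ j ∈ Finset.range n, q ^ (j / N)
      ≤ ∑ j ∈ Finset.range (n * N), q ^ (j / N) := hsub
    _ = (N : ℝ) * ∑ k ∈ Finset.range n, q ^ k := sleepgate_block_sum q N hN n
    _ ≤ (N : ℝ) / p := by
        have hgeom : ∑ k ∈ Finset.range n, q ^ k ≤ 1 / p := by
          have := geom_sum_eq (x := q) (by linarith) n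
          rw [this, show q - 1 = -p by rw [hq]; ring, div_neg, ← neg_div, neg_sub]
          have hqn : 0 ≤ q ^ n := by positivity
          gcongr
          linarith
        have hNpos : (0:ℝ) ≤ (N:ℝ) := by positivity
        calc (N : ℝ) * ∑ k ∈ Finset.range n, q ^ k ≤ (N : ℝ) * (1 / p) :=
              mul_le_mul_of_nonneg_left hgeom hNpos
          _ = (N : ℝ) / p := by ring
end

section
/- For all real p with 0 < p ≤ 1 and all natural numbers n ≥ 1 and N ≥ 1, the stale-entry survival sum S(n, N, p) = Σ_{i=1}^{n} (1 − p)^{⌊(n − i)/N⌋} satisfies S(n, N, p) ≤ N + (1 − p) · n. -/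
/-!
After reindexing by `j = n - i` the terms are `x ^ (j / N)` with `x = 1 - p ∈ [0, 1]`. Each is
at most `1`, and at most `x` as soon as `j ≥ N` (at least one sleep cycle has passed), so it is
bounded by `[j < N] + x`; summing over `j < n` gives at most `N + x * n`.
-/

open Finset

theorem sum_Icc_one_sub_eq_sum_range {M : Type*} [AddCommMonoid M] (f : ℕ → M) (n : ℕ) :
    ∑ i ∈ Icc 1 n, f (n - i) = ∑ j ∈ range n, f j := by
  refine sum_nbij' (n - ·) (n - ·) ?_ ?_ ?_ ?_ ?_ <;> intro i hi <;> simp_all <;> omega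

section PowDiv

variable {R : Type*} [Semiring R] [PartialOrder R] [IsOrderedRing R] {x : R}

theorem pow_div_le_ite_add (hx0 : 0 ≤ x) (hx1 : x ≤ 1) {N : ℕ} (hN : 0 < N) (j : ℕ) :
    x ^ (j / N) ≤ (if j < N then 1 else 0) + x := by
  split_ifs with hj
  · rw [Nat.div_eq_of_lt hj, pow_zero]
    exact le_add_of_nonneg_right hx0
  · have hdiv : j / N ≠ 0 := (Nat.div_pos (not_lt.mp hj) hN).ne'
    rw [zero_add]
    exact pow_le_of_le_one hx0 hx1 hdiv

theorem card_filter_range_lt_le (n N : ℕ) : #((range n).filter (· < N)) ≤ N :=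
  (card_le_card fun _ hj => mem_range.mpr (mem_filter.mp hj).2).trans (card_range N).le

theorem sum_range_pow_div_le (hx0 : 0 ≤ x) (hx1 : x ≤ 1) (n : ℕ) {N : ℕ} (hN : 0 < N) :
    ∑ j ∈ range n, x ^ (j / N) ≤ N + x * n :=
  calc ∑ j ∈ range n, x ^ (j / N)
      ≤ ∑ j ∈ range n, ((if j < N then 1 else 0) + x) :=
        sum_le_sum fun j _ => pow_div_le_ite_add hx0 hx1 hN j
    _ = #((range n).filter (· < N)) + x * n := by
        rw [sum_add_distrib, sum_boole, sum_const, card_range, nsmul_eq_mul, Nat.cast_comm]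
    _ ≤ N + x * n := by
        gcongr
        exact_mod_cast card_filter_range_lt_le n N

end PowDiv

theorem sleepgate_survival_sum_le_add_general
    (p : ℝ) (hp0 : 0 < p) (hp1 : p ≤ 1) (n N : ℕ) (hN : 1 ≤ N) :
    ∑ i ∈ Finset.Icc 1 n, (1 - p) ^ ((n - i) / N) ≤ (N : ℝ) + (1 - p) * n := by
  rw [sum_Icc_one_sub_eq_sum_range (fun j => (1 - p) ^ (j / N))]
  exact sum_range_pow_div_le (by linarith) (by linarith) n hN

/-- For all real `p` with `0 < p ≤ 1` and all natural numbers `n ≥ 1`, `N ≥ 1`,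
the stale-entry survival sum `S(n, N, p) = ∑_{i=1}^{n} (1 - p) ^ ⌊(n - i)/N⌋`
satisfies `S(n, N, p) ≤ N + (1 - p) · n`. -/
theorem sleepgate_survival_sum_le_add
    (p : ℝ) (hp0 : 0 < p) (hp1 : p ≤ 1) (n N : ℕ) (hn : 1 ≤ n) (hN : 1 ≤ N) :
    ∑ i ∈ Finset.Icc 1 n, (1 - p) ^ ((n - i) / N) ≤ (N : ℝ) + (1 - p) * n :=
  sleepgate_survival_sum_le_add_general p hp0 hp1 n N hN
end
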